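/- Let V be a unital multiplicative partial isometry on H with units 𝟙 ∈ A and 𝟙̂ ∈ Â. Then (Δ̂(𝟙̂)⊗1)(1⊗Δ̂(𝟙̂)) = (1⊗Δ̂(𝟙̂))(Δ̂(𝟙̂)⊗1) = V₂₃*V₁₃*V₁₃V₂₃ on H⊗H⊗H. -/
import Mathlib


open Matrix

namespace MPIpaper

variable {n : Type*} [Fintype n] [DecidableEq n]

noncomputable section

/-- `W₁₂ = W ⊗ 1` on `H ⊗ H ⊗ H`. -/
def leg12 (V : Matrix (n × n) (n × n) ℂ) : Matrix (n × n × n) (n × n × n) ℂ :=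
  Matrix.of fun p q => V (p.1, p.2.1) (q.1, q.2.1) * (if p.2.2 = q.2.2 then (1 : ℂ) else 0)

/-- `W₂₃ = 1 ⊗ W` on `H ⊗ H ⊗ H`. -/
def leg23 (V : Matrix (n × n) (n × n) ℂ) : Matrix (n × n × n) (n × n × n) ℂ :=
  Matrix.of fun p q => (if p.1 = q.1 then (1 : ℂ) else 0) * V p.2 q.2

/-- `W₁₃ = (1⊗Σ)(W⊗1)(1⊗Σ)` on `H ⊗ H ⊗ H`. -/
def leg13 (V : Matrix (n × n) (n × n) ℂ) : Matrix (n × n × n) (n × n × n) ℂ :=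
  Matrix.of fun p q => V (p.1, p.2.2) (q.1, q.2.2) * (if p.2.1 = q.2.1 then (1 : ℂ) else 0)

/-- A multiplicative partial isometry: `VV*V = V`, the pentagon equation, and the
three auxiliary (hexagon-type) equations. -/
def IsMPI (V : Matrix (n × n) (n × n) ℂ) : Prop :=
  V * Vᴴ * V = V ∧
  leg23 V * leg12 V = leg12 V * leg13 V * leg23 V ∧
  leg13 V * leg23 V * (leg23 V)ᴴ = (leg12 V)ᴴ * leg12 V * leg13 V ∧
  leg12 V * (leg12 V)ᴴ * leg23 V = leg23 V * leg12 V * (leg12 V)ᴴ ∧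
  leg12 V * (leg23 V)ᴴ * leg23 V = (leg23 V)ᴴ * leg23 V * leg12 V

/-- `λ(ω) = (ω ⊗ id)(V)`. -/
def lam (ω : Matrix n n ℂ →ₗ[ℂ] ℂ) (V : Matrix (n × n) (n × n) ℂ) : Matrix n n ℂ :=
  Matrix.of fun i j => ω (Matrix.of fun a b => V (a, i) (b, j))

/-- `ρ(ω) = (id ⊗ ω)(V)`. -/
def rho (ω : Matrix n n ℂ →ₗ[ℂ] ℂ) (V : Matrix (n × n) (n × n) ℂ) : Matrix n n ℂ :=
  Matrix.of fun i j => ω (Matrix.of fun a b => V (i, a) (j, b))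

/-- `1 ⊗ X` on `H ⊗ H`. -/
def oneTensor (X : Matrix n n ℂ) : Matrix (n × n) (n × n) ℂ :=
  Matrix.of fun p q => (if p.1 = q.1 then (1 : ℂ) else 0) * X p.2 q.2

/-- `X ⊗ 1` on `H ⊗ H`. -/
def tensorOne (X : Matrix n n ℂ) : Matrix (n × n) (n × n) ℂ :=
  Matrix.of fun p q => X p.1 q.1 * (if p.2 = q.2 then (1 : ℂ) else 0)

/-- `Δ(X) = V (X ⊗ 1) V*`. -/
def Delta (V : Matrix (n × n) (n × n) ℂ) (X : Matrix n n ℂ) : Matrix (n × n) (n × n) ℂ :=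
  V * tensorOne X * Vᴴ

/-- `Δ̂(X) = V* (1 ⊗ X) V`. -/
def hatDelta (V : Matrix (n × n) (n × n) ℂ) (X : Matrix n n ℂ) : Matrix (n × n) (n × n) ℂ :=
  Vᴴ * oneTensor X * V

/-- `(ω ⊗ ω')(W)` for an operator `W` on `H ⊗ H`. -/
def applyBoth (ω ω' : Matrix n n ℂ →ₗ[ℂ] ℂ) (W : Matrix (n × n) (n × n) ℂ) : ℂ :=
  ω (Matrix.of fun i j => ω' (Matrix.of fun k l => W (i, k) (j, l)))

end

set_option linter.unusedSectionVars false

section auxlemmas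

variable (ε : Matrix n n ℂ →ₗ[ℂ] ℂ)

lemma leg12_mul (A B : Matrix (n × n) (n × n) ℂ) : leg12 (A * B) = leg12 A * leg12 B := by
  ext ⟨i, a, c⟩ ⟨j, b, d⟩
  simp only [leg12, of_apply, mul_apply, Fintype.sum_prod_type]
  simp [mul_ite, ite_mul, mul_zero, zero_mul, mul_one, one_mul, Finset.sum_mul,
    Finset.mul_sum, Finset.sum_ite_eq, Finset.sum_ite_eq']

lemma leg23_mul (A B : Matrix (n × n) (n × n) ℂ) : leg23 (A * B) = leg23 A * leg23 B := by
  ext ⟨i, a, c⟩ ⟨j, b, d⟩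
  simp only [leg23, of_apply, mul_apply, Fintype.sum_prod_type]
  simp [mul_ite, ite_mul, mul_zero, zero_mul, mul_one, one_mul, Finset.sum_mul,
    Finset.mul_sum, Finset.sum_ite_eq, Finset.sum_ite_eq']

lemma leg12_conjT (A : Matrix (n × n) (n × n) ℂ) : leg12 (Aᴴ) = (leg12 A)ᴴ := by
  ext ⟨i, a, c⟩ ⟨j, b, d⟩
  simp only [leg12, of_apply, conjTranspose_apply]
  by_cases h : c = d <;> simp [h, eq_comm]

lemma leg23_conjT (A : Matrix (n × n) (n × n) ℂ) : leg23 (Aᴴ) = (leg23 A)ᴴ := by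
  ext ⟨i, a, c⟩ ⟨j, b, d⟩
  simp only [leg23, of_apply, conjTranspose_apply]
  by_cases h : i = j <;> simp [h, eq_comm]

/-- coordinate functional -/
def coord (a b : n) : Matrix n n ℂ →ₗ[ℂ] ℂ where
  toFun X := X a b
  map_add' _ _ := rfl
  map_smul' _ _ := rfl

lemma tensorOne_mul_apply (X : Matrix n n ℂ) (V : Matrix (n × n) (n × n) ℂ) (i a j b : n) :
    (tensorOne X * V) (i, a) (j, b) = ∑ k, X i k * V (k, a) (j, b) := by
  simp only [mul_apply, tensorOne, of_apply, Fintype.sum_prod_type]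
  simp [mul_ite, ite_mul, mul_zero, zero_mul, mul_one, Finset.mul_sum,
    Finset.sum_ite_eq, Finset.sum_ite_eq']

lemma mul_tensorOne_apply (V : Matrix (n × n) (n × n) ℂ) (X : Matrix n n ℂ) (i a j b : n) :
    (V * tensorOne X) (i, a) (j, b) = ∑ u, V (i, a) (u, b) * X u j := by
  simp only [mul_apply, tensorOne, of_apply, Fintype.sum_prod_type]
  simp [mul_ite, ite_mul, mul_zero, zero_mul, mul_one, Finset.mul_sum,
    Finset.sum_ite_eq, Finset.sum_ite_eq', mul_comm]

lemma oneTensor_mul_apply (X : Matrix n n ℂ) (V : Matrix (n × n) (n × n) ℂ) (i a j b : n) :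
    (oneTensor X * V) (i, a) (j, b) = ∑ c, X a c * V (i, c) (j, b) := by
  simp only [mul_apply, oneTensor, of_apply, Fintype.sum_prod_type]
  simp [mul_ite, ite_mul, mul_zero, zero_mul, one_mul, Finset.mul_sum,
    Finset.sum_ite_eq, Finset.sum_ite_eq']

lemma leg23tensorOne_mul_apply (X : Matrix n n ℂ) (Y : Matrix (n × n × n) (n × n × n) ℂ)
    (i a c j b d : n) :
    (leg23 (tensorOne X) * Y) (i, a, c) (j, b, d) = ∑ e, X a e * Y (i, e, c) (j, b, d) := by
  simp only [mul_apply, leg23, tensorOne, of_apply, Fintype.sum_prod_type]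
  simp [mul_ite, ite_mul, mul_zero, zero_mul, mul_one, one_mul, Finset.mul_sum,
    Finset.sum_ite_eq, Finset.sum_ite_eq']

lemma leg1213_apply (V : Matrix (n × n) (n × n) ℂ) (i a c j b d : n) :
    (leg12 V * leg13 V) (i, a, c) (j, b, d) = ∑ u, V (i, a) (u, b) * V (u, c) (j, d) := by
  simp only [mul_apply, leg12, leg13, of_apply, Fintype.sum_prod_type]
  simp [mul_ite, ite_mul, mul_zero, zero_mul, mul_one, one_mul,
    Finset.sum_ite_eq, Finset.sum_ite_eq']

lemma tensorOne_rho_mul (V : Matrix (n × n) (n × n) ℂ)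
    (hε : ∀ ω : Matrix n n ℂ →ₗ[ℂ] ℂ,
      rho ε V * rho ω V = rho ω V ∧ rho ω V * rho ε V = rho ω V) :
    tensorOne (rho ε V) * V = V := by
  ext ⟨i, a⟩ ⟨j, b⟩
  have h := Matrix.ext_iff.2 ((hε (coord a b)).1) i j
  simp only [mul_apply, rho, coord, of_apply, LinearMap.coe_mk, AddHom.coe_mk] at h
  rw [tensorOne_mul_apply]
  exact h

lemma mul_tensorOne_rho (V : Matrix (n × n) (n × n) ℂ)
    (hε : ∀ ω : Matrix n n ℂ →ₗ[ℂ] ℂ,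
      rho ε V * rho ω V = rho ω V ∧ rho ω V * rho ε V = rho ω V) :
    V * tensorOne (rho ε V) = V := by
  ext ⟨i, a⟩ ⟨j, b⟩
  have h := Matrix.ext_iff.2 ((hε (coord a b)).2) i j
  simp only [mul_apply, rho, coord, of_apply, LinearMap.coe_mk, AddHom.coe_mk] at h
  rw [mul_tensorOne_apply]
  exact h

/-- apply `ε` to the third leg -/
noncomputable def slice3 (Y : Matrix (n × n × n) (n × n × n) ℂ) : Matrix (n × n) (n × n) ℂ :=
  Matrix.of fun p q => ε (Matrix.of fun c d => Y (p.1, p.2, c) (q.1, q.2, d))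

lemma eps_of_sum (f : n → n → n → ℂ) :
    ε (Matrix.of fun c d => ∑ k, f k c d) = ∑ k, ε (Matrix.of (f k)) := by
  have h : (Matrix.of fun c d => ∑ k, f k c d) = ∑ k, Matrix.of (f k) := by
    ext c d; simp [Matrix.sum_apply]
  rw [h, map_sum]

lemma eps_of_smul (r : ℂ) (f : n → n → ℂ) :
    ε (Matrix.of fun c d => r * f c d) = r * ε (Matrix.of f) := by
  have h : (Matrix.of fun c d => r * f c d) = r • Matrix.of f := by
    ext c d; simp [smul_eq_mul]
  rw [h, _root_.map_smul, smul_eq_mul]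

lemma slice3_leg23tensorOne (X : Matrix n n ℂ) (Y : Matrix (n × n × n) (n × n × n) ℂ) :
    slice3 ε (leg23 (tensorOne X) * Y) = oneTensor X * slice3 ε Y := by
  ext ⟨i, a⟩ ⟨j, b⟩
  rw [oneTensor_mul_apply]
  show ε (Matrix.of fun c d => (leg23 (tensorOne X) * Y) (i, a, c) (j, b, d)) = _
  have h : (Matrix.of fun c d => (leg23 (tensorOne X) * Y) (i, a, c) (j, b, d))
      = Matrix.of fun c d => ∑ e, X a e * Y (i, e, c) (j, b, d) := by
    ext c d; rw [of_apply, of_apply, leg23tensorOne_mul_apply]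
  rw [h, eps_of_sum]
  refine Finset.sum_congr rfl fun e _ => ?_
  rw [eps_of_smul]
  rfl

lemma slice3_leg1213 (V : Matrix (n × n) (n × n) ℂ) :
    slice3 ε (leg12 V * leg13 V) = V * tensorOne (rho ε V) := by
  ext ⟨i, a⟩ ⟨j, b⟩
  rw [mul_tensorOne_apply]
  show ε (Matrix.of fun c d => (leg12 V * leg13 V) (i, a, c) (j, b, d)) = _
  have h : (Matrix.of fun c d => (leg12 V * leg13 V) (i, a, c) (j, b, d))
      = Matrix.of fun c d => ∑ u, V (i, a) (u, b) * V (u, c) (j, d) := by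
    ext c d; rw [of_apply, of_apply, leg1213_apply]
  rw [h, eps_of_sum]
  refine Finset.sum_congr rfl fun u _ => ?_
  rw [eps_of_smul]
  rfl

lemma key_oneTensor (V : Matrix (n × n) (n × n) ℂ) (hV : IsMPI V)
    (hε : ∀ ω : Matrix n n ℂ →ₗ[ℂ] ℂ,
      rho ε V * rho ω V = rho ω V ∧ rho ω V * rho ε V = rho ω V) :
    oneTensor (rho ε V) * V = V := by
  set E := rho ε V with hE
  have hA : tensorOne E * V = V := tensorOne_rho_mul ε V hε
  have hA' : V * tensorOne E = V := mul_tensorOne_rho ε V hε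
  have h1 : leg12 V * (leg12 V)ᴴ * leg12 V = leg12 V := by
    rw [← leg12_conjT, ← leg12_mul, ← leg12_mul, hV.1]
  have hder : leg23 V * leg12 V * (leg23 V)ᴴ = leg12 V * leg13 V := by
    calc leg23 V * leg12 V * (leg23 V)ᴴ
        = leg12 V * leg13 V * leg23 V * (leg23 V)ᴴ := by rw [hV.2.1]
      _ = leg12 V * (leg13 V * leg23 V * (leg23 V)ᴴ) := by noncomm_ring
      _ = leg12 V * ((leg12 V)ᴴ * leg12 V * leg13 V) := by rw [hV.2.2.1]
      _ = leg12 V * (leg12 V)ᴴ * leg12 V * leg13 V := by noncomm_ring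
      _ = leg12 V * leg13 V := by rw [h1]
  have hE23 : leg23 (tensorOne E) * leg23 V = leg23 V := by
    rw [← leg23_mul, hA]
  have hB : leg23 (tensorOne E) * (leg12 V * leg13 V) = leg12 V * leg13 V := by
    rw [← hder, ← mul_assoc, ← mul_assoc, hE23]
  have hslice := congrArg (slice3 ε) hB
  rw [slice3_leg23tensorOne, slice3_leg1213, ← hE, hA'] at hslice
  exact hslice

end auxlemmas

theorem statement14 (V : Matrix (n × n) (n × n) ℂ) (hV : IsMPI V)
    (ε εhat : Matrix n n ℂ →ₗ[ℂ] ℂ)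
    (hεhat : ∀ ω : Matrix n n ℂ →ₗ[ℂ] ℂ,
      lam εhat V * lam ω V = lam ω V ∧ lam ω V * lam εhat V = lam ω V)
    (hε : ∀ ω : Matrix n n ℂ →ₗ[ℂ] ℂ,
      rho ε V * rho ω V = rho ω V ∧ rho ω V * rho ε V = rho ω V) :
    leg12 (hatDelta V (rho ε V)) * leg23 (hatDelta V (rho ε V)) =
      leg23 (hatDelta V (rho ε V)) * leg12 (hatDelta V (rho ε V)) ∧
    leg12 (hatDelta V (rho ε V)) * leg23 (hatDelta V (rho ε V)) =
      (leg23 V)ᴴ * (leg13 V)ᴴ * leg13 V * leg23 V := by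
  have hC : oneTensor (rho ε V) * V = V := key_oneTensor ε V hV hε
  have hD : hatDelta V (rho ε V) = Vᴴ * V := by
    unfold hatDelta; rw [mul_assoc, hC]
  rw [hD]
  have h12 : leg12 (Vᴴ * V) = (leg12 V)ᴴ * leg12 V := by rw [leg12_mul, leg12_conjT]
  have h23 : leg23 (Vᴴ * V) = (leg23 V)ᴴ * leg23 V := by rw [leg23_mul, leg23_conjT]
  rw [h12, h23]
  have h2 : leg23 V * (leg23 V)ᴴ * leg23 V = leg23 V := by
    rw [← leg23_conjT, ← leg23_mul, ← leg23_mul, hV.1]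
  -- main chain
  have hG2 : (leg12 V)ᴴ * leg12 V * ((leg23 V)ᴴ * leg23 V)
      = (leg23 V)ᴴ * (leg13 V)ᴴ * leg13 V * leg23 V := by
    calc (leg12 V)ᴴ * leg12 V * ((leg23 V)ᴴ * leg23 V)
        = (leg12 V)ᴴ * (leg12 V * (leg23 V)ᴴ * leg23 V) := by noncomm_ring
      _ = (leg12 V)ᴴ * ((leg23 V)ᴴ * leg23 V * leg12 V) := by rw [hV.2.2.2.2]
      _ = (leg23 V * leg12 V)ᴴ * (leg23 V * leg12 V) := by
          rw [conjTranspose_mul]; noncomm_ring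
      _ = (leg12 V * leg13 V * leg23 V)ᴴ * (leg12 V * leg13 V * leg23 V) := by rw [hV.2.1]
      _ = (leg23 V)ᴴ * (leg13 V)ᴴ * ((leg12 V)ᴴ * leg12 V * leg13 V) * leg23 V := by
          rw [conjTranspose_mul, conjTranspose_mul]; noncomm_ring
      _ = (leg23 V)ᴴ * (leg13 V)ᴴ * (leg13 V * leg23 V * (leg23 V)ᴴ) * leg23 V := by
          rw [hV.2.2.1]
      _ = (leg23 V)ᴴ * (leg13 V)ᴴ * leg13 V * (leg23 V * (leg23 V)ᴴ * leg23 V) := by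
          noncomm_ring
      _ = (leg23 V)ᴴ * (leg13 V)ᴴ * leg13 V * leg23 V := by rw [h2]
  refine ⟨?_, hG2⟩
  have hsa : ((leg23 V)ᴴ * (leg13 V)ᴴ * leg13 V * leg23 V)ᴴ
      = (leg23 V)ᴴ * (leg13 V)ᴴ * leg13 V * leg23 V := by
    simp only [conjTranspose_mul, conjTranspose_conjTranspose]
    noncomm_ring
  calc (leg12 V)ᴴ * leg12 V * ((leg23 V)ᴴ * leg23 V)
      = ((leg23 V)ᴴ * (leg13 V)ᴴ * leg13 V * leg23 V)ᴴ := by rw [hG2, hsa]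
    _ = ((leg12 V)ᴴ * leg12 V * ((leg23 V)ᴴ * leg23 V))ᴴ := by rw [hG2]
    _ = (leg23 V)ᴴ * leg23 V * ((leg12 V)ᴴ * leg12 V) := by
        simp only [conjTranspose_mul, conjTranspose_conjTranspose]
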